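/- Observational learning never harms backer contentedness when both projects are low-quality: in the two-backer model with state V = (0,0), for all p₁, p₂ ∈ (1/2, 1), the second backer's probability of abstaining under observational learning, Σ_{x₁ ∈ {0,1,2}} P(x₁ | (0,0)) · P(x₂ = 0 | x₁, (0,0)), is at least his no-learning abstention probability (p₂² + (1−p₂)²)². -/
import Mathlib


open Finset

/-- Probability of signal pair `s` given quality state `V` for a backer with expertness `p`:
signals are independent per project and correct with probability `p`
(`true` = high quality / high signal). -/
noncomputable def sigProb (p : ℝ) (V s : Bool × Bool) : ℝ :=
  (if s.1 = V.1 then p else 1 - p) * (if s.2 = V.2 then p else 1 - p)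

/-- Bayesian posterior over quality state `V` given own signals `s`, uniform prior. -/
noncomputable def post (p : ℝ) (s V : Bool × Bool) : ℝ :=
  sigProb p V s / ∑ V' : Bool × Bool, sigProb p V' s

/-- Probability of pledging to project 1 given own signals `s`. -/
noncomputable def pledge1 (p : ℝ) (s : Bool × Bool) : ℝ :=
  post p s (true, false) + (1/2) * post p s (true, true)

/-- Probability of pledging to project 2 given own signals `s`. -/
noncomputable def pledge2 (p : ℝ) (s : Bool × Bool) : ℝ :=
  post p s (false, true) + (1/2) * post p s (true, true)

/-- Probability of abstaining given own signals `s`. -/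
noncomputable def abstain (p : ℝ) (s : Bool × Bool) : ℝ :=
  post p s (false, false)

/-- Unconditional (on signals) probability of pledging to project 1 in state `V`. -/
noncomputable def condPledge1 (p : ℝ) (V : Bool × Bool) : ℝ :=
  ∑ s : Bool × Bool, sigProb p V s * pledge1 p s

/-- Unconditional probability of pledging to project 2 in state `V`. -/
noncomputable def condPledge2 (p : ℝ) (V : Bool × Bool) : ℝ :=
  ∑ s : Bool × Bool, sigProb p V s * pledge2 p s

/-- Unconditional probability of abstaining in state `V`. -/
noncomputable def condAbstain (p : ℝ) (V : Bool × Bool) : ℝ :=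
  ∑ s : Bool × Bool, sigProb p V s * abstain p s

/-- First backer's conditional decision probabilities in state `V`:
`0` = abstain, `1` = pledge to project 1, `2` = pledge to project 2. -/
noncomputable def condDec (p : ℝ) (V : Bool × Bool) (x : Fin 3) : ℝ :=
  if x = 0 then condAbstain p V
  else if x = 1 then condPledge1 p V
  else condPledge2 p V

/-- Second backer's posterior over state `V` given the first backer's decision `x`
and his own signals `s`: ∝ P(x₁=x|V)·P(s|V), uniform prior. -/
noncomputable def postOLdec (p1 p2 : ℝ) (x : Fin 3) (s V : Bool × Bool) : ℝ :=
  condDec p1 V x * sigProb p2 V s /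
    ∑ V' : Bool × Bool, condDec p1 V' x * sigProb p2 V' s

/-- Second backer's probability of abstaining in the true state, given the first
backer decision, under observational learning. -/
noncomputable def abstainOL (p1 p2 : ℝ) (x : Fin 3) (V : Bool × Bool) : ℝ :=
  ∑ s : Bool × Bool, sigProb p2 V s * postOLdec p1 p2 x s (false, false)

-- helpers
lemma sigProb_pos {p : ℝ} (hp : 0 < p) (hp' : p < 1) (V s : Bool × Bool) :
    0 < sigProb p V s := by
  unfold sigProb; split_ifs <;> nlinarith

lemma sigProb_sum (p : ℝ) (s : Bool × Bool) :
    ∑ V : Bool × Bool, sigProb p V s = 1 := by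
  rcases s with ⟨a, b⟩
  cases a <;> cases b <;>
    simp [sigProb, Fintype.sum_prod_type, Fintype.sum_bool] <;> ring

lemma post_eq (p : ℝ) (s V : Bool × Bool) : post p s V = sigProb p V s := by
  unfold post; rw [sigProb_sum, div_one]

lemma sigProb_sum' (p : ℝ) (V : Bool × Bool) :
    ∑ s : Bool × Bool, sigProb p V s = 1 := by
  rcases V with ⟨a, b⟩
  cases a <;> cases b <;>
    simp [sigProb, Fintype.sum_prod_type, Fintype.sum_bool] <;> ring

lemma dec_term_sum (p : ℝ) (V s : Bool × Bool) :
    sigProb p V s * abstain p s + sigProb p V s * pledge1 p s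
      + sigProb p V s * pledge2 p s = sigProb p V s := by
  have hs : sigProb p (false,false) s + sigProb p (false,true) s
      + sigProb p (true,false) s + sigProb p (true,true) s = 1 := by
    have := sigProb_sum p s
    rw [Fintype.sum_prod_type] at this
    simp only [Fintype.sum_bool] at this
    linarith
  simp only [abstain, pledge1, pledge2, post_eq]
  linear_combination sigProb p V s * hs

lemma condDec_sum (p : ℝ) (V : Bool × Bool) :
    condDec p V 0 + condDec p V 1 + condDec p V 2 = 1 := by
  have h0 : condDec p V 0 = condAbstain p V := by simp [condDec]
  have h1 : condDec p V 1 = condPledge1 p V := by simp [condDec]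
  have h2 : condDec p V 2 = condPledge2 p V := by simp [condDec]
  rw [h0, h1, h2]
  simp only [condAbstain, condPledge1, condPledge2, ← Finset.sum_add_distrib]
  rw [Finset.sum_congr rfl fun s _ => dec_term_sum p V s, sigProb_sum']

lemma condDec_pos {p : ℝ} (hp : 0 < p) (hp' : p < 1) (V : Bool × Bool) (x : Fin 3) :
    0 < condDec p V x := by
  have hterm : ∀ s : Bool × Bool, 0 < sigProb p V s := sigProb_pos hp hp' V
  unfold condDec
  split_ifs
  · refine Finset.sum_pos (fun s _ => ?_) ⟨(false, false), Finset.mem_univ _⟩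
    exact mul_pos (hterm s) (by rw [abstain, post_eq]; exact sigProb_pos hp hp' _ s)
  · refine Finset.sum_pos (fun s _ => ?_) ⟨(false, false), Finset.mem_univ _⟩
    refine mul_pos (hterm s) ?_
    rw [pledge1, post_eq, post_eq]
    nlinarith [sigProb_pos hp hp' (true,false) s, sigProb_pos hp hp' (true,true) s]
  · refine Finset.sum_pos (fun s _ => ?_) ⟨(false, false), Finset.mem_univ _⟩
    refine mul_pos (hterm s) ?_
    rw [pledge2, post_eq, post_eq]
    nlinarith [sigProb_pos hp hp' (false,true) s, sigProb_pos hp hp' (true,true) s]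

lemma engel3 (a0 a1 a2 d0 d1 d2 : ℝ) (h0 : 0 < d0) (h1 : 0 < d1) (h2 : 0 < d2) :
    (a0 + a1 + a2)^2 / (d0 + d1 + d2) ≤ a0^2/d0 + a1^2/d1 + a2^2/d2 := by
  have e2 : ∀ a b p q : ℝ, 0 < p → 0 < q → (a+b)^2/(p+q) ≤ a^2/p + b^2/q := by
    intro a b p q hpp hq
    rw [div_add_div _ _ hpp.ne' hq.ne', div_le_div_iff₀ (by positivity) (by positivity)]
    nlinarith [sq_nonneg (a*q - b*p)]
  calc (a0+a1+a2)^2/(d0+d1+d2) ≤ (a0+a1)^2/(d0+d1) + a2^2/d2 :=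
        e2 _ _ _ _ (by positivity) h2
    _ ≤ a0^2/d0 + a1^2/d1 + a2^2/d2 := by linarith [e2 a0 a1 d0 d1 h0 h1]


/-- OL never harms backer contentedness in state (0,0): the second
backer's abstention probability under observational learning is at least his
no-learning abstention probability (p₂² + (1−p₂)²)², for all p₁, p₂ ∈ (1/2,1). -/
theorem stmt16 (p1 p2 : ℝ) (h1 : 1/2 < p1) (h1' : p1 < 1)
    (h2 : 1/2 < p2) (h2' : p2 < 1) :
    (∑ x : Fin 3, condDec p1 (false, false) x * abstainOL p1 p2 x (false, false))
      ≥ (p2^2 + (1-p2)^2)^2 := by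
  have hp1 : 0 < p1 := by linarith
  have hp2 : 0 < p2 := by linarith
  set F : Fin 3 → ℝ := condDec p1 (false, false) with hF
  set G : Bool × Bool → ℝ := sigProb p2 (false, false) with hG
  set D : Fin 3 → Bool × Bool → ℝ :=
    fun x s => ∑ V' : Bool × Bool, condDec p1 V' x * sigProb p2 V' s with hD
  have hDpos : ∀ x s, 0 < D x s := fun x s =>
    Finset.sum_pos (fun V' _ => mul_pos (condDec_pos hp1 h1' V' x)
      (sigProb_pos hp2 h2' V' s)) ⟨(false, false), Finset.mem_univ _⟩
  have hDsum : ∀ s, D 0 s + D 1 s + D 2 s = 1 := by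
    intro s
    simp only [hD, ← Finset.sum_add_distrib]
    rw [Finset.sum_congr rfl fun V' _ => by
      rw [← add_mul, ← add_mul, condDec_sum, one_mul], sigProb_sum]
  have hFsum : F 0 + F 1 + F 2 = 1 := condDec_sum p1 (false, false)
  have key : ∀ x : Fin 3, F x * abstainOL p1 p2 x (false, false)
      = ∑ s : Bool × Bool, (F x * G s)^2 / D x s := by
    intro x
    rw [abstainOL, Finset.mul_sum]
    refine Finset.sum_congr rfl fun s _ => ?_
    rw [postOLdec]
    have hne : D x s ≠ 0 := (hDpos x s).ne'
    show F x * (G s * (F x * G s / D x s)) = (F x * G s)^2 / D x s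
    field_simp
  have main : ∀ s : Bool × Bool,
      G s ^ 2 ≤ (F 0 * G s)^2 / D 0 s + (F 1 * G s)^2 / D 1 s
        + (F 2 * G s)^2 / D 2 s := by
    intro s
    have h := engel3 (F 0 * G s) (F 1 * G s) (F 2 * G s) (D 0 s) (D 1 s) (D 2 s)
      (hDpos 0 s) (hDpos 1 s) (hDpos 2 s)
    rw [hDsum s, div_one] at h
    calc G s ^ 2 = (F 0 * G s + F 1 * G s + F 2 * G s)^2 := by
          rw [← add_mul, ← add_mul, hFsum, one_mul]
      _ ≤ _ := h
  have hGsum : ∑ s : Bool × Bool, G s ^ 2 = (p2^2 + (1-p2)^2)^2 := by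
    simp [hG, sigProb, Fintype.sum_prod_type, Fintype.sum_bool]
    ring
  rw [ge_iff_le, ← hGsum, Fin.sum_univ_three, key 0, key 1, key 2,
    ← Finset.sum_add_distrib, ← Finset.sum_add_distrib]
  exact Finset.sum_le_sum fun s _ => main s
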